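/- Let S be epsilon-strongly graded by a group G with R = S_e and identity elements ε_g of S_g S_{g⁻¹}. Then S is strongly graded by G (i.e. S_g S_h = S_{gh} for all g,h) if and only if ε_g = 1 for every g ∈ G. -/

import Mathlib

/-! If `ε g = 1` then `1 ∈ 𝒜 g * 𝒜 (-g)`, so the factorisation
`𝒜 g * 𝒜 h = (𝒜 g * 𝒜 (-g)) * 𝒜 (g + h)` contains all of `𝒜 (g + h)`; the reverse inclusion
holds in any graded ring. Conversely, strong grading puts `1 ∈ 𝒜 0 = 𝒜 g * 𝒜 (-g)`, and an
identity element of a set containing `1` is `1`. -/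

open Pointwise

variable {S : Type*} [Ring S] {ι : Type*} [AddGroup ι]

/-- `I` is a unital ideal of the principal component `𝒜 0`. -/
def IsUnitalIdealOfZero (𝒜 : ι → AddSubgroup S) (I : AddSubgroup S) : Prop :=
  I ≤ 𝒜 0 ∧ (∀ r ∈ 𝒜 0, ∀ x ∈ I, r * x ∈ I ∧ x * r ∈ I) ∧
    ∃ e ∈ I, ∀ x ∈ I, e * x = x ∧ x * e = x

/-- `S` is epsilon-strongly graded by the (additively written) group `ι`:
for each `g`, `𝒜 g * 𝒜 (-g)` is a unital ideal of `𝒜 0` and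
`𝒜 g * 𝒜 h = (𝒜 g * 𝒜 (-g)) * 𝒜 (g+h) = 𝒜 (g+h) * (𝒜 (-h) * 𝒜 h)`. -/
def IsEpsilonStronglyGraded (𝒜 : ι → AddSubgroup S) : Prop :=
  (∀ g : ι, IsUnitalIdealOfZero 𝒜 (𝒜 g * 𝒜 (-g))) ∧
    ∀ g h : ι, 𝒜 g * 𝒜 h = (𝒜 g * 𝒜 (-g)) * 𝒜 (g + h) ∧
      𝒜 g * 𝒜 h = 𝒜 (g + h) * (𝒜 (-h) * 𝒜 h)

namespace AddSubgroup

variable {R : Type*}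

section NonUnitalNonAssocRing

variable [NonUnitalNonAssocRing R] {M N K : AddSubgroup R}

theorem mul_mem_mul {m n : R} (hm : m ∈ M) (hn : n ∈ N) : m * n ∈ M * N :=
  AddSubmonoid.mul_mem_mul hm hn

theorem mul_le : M * N ≤ K ↔ ∀ m ∈ M, ∀ n ∈ N, m * n ∈ K :=
  AddSubmonoid.mul_le (M := M.toAddSubmonoid) (N := N.toAddSubmonoid) (P := K.toAddSubmonoid)

end NonUnitalNonAssocRing

theorem le_mul_of_one_mem [NonAssocRing R] {I : AddSubgroup R} (hI : (1 : R) ∈ I)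
    (M : AddSubgroup R) : M ≤ I * M := fun x hx => by
  simpa only [one_mul] using mul_mem_mul hI hx

theorem mul_le_of_gradedMonoid [Ring R] {G : Type*} [AddMonoid G] (𝒜 : G → AddSubgroup R)
    [SetLike.GradedMonoid 𝒜] (g h : G) : 𝒜 g * 𝒜 h ≤ 𝒜 (g + h) :=
  mul_le.2 fun _ ha _ hb => SetLike.mul_mem_graded ha hb

end AddSubgroup

theorem IsEpsilonStronglyGraded.mul_eq_of_one_mem {𝒜 : ι → AddSubgroup S}
    [SetLike.GradedMonoid 𝒜] (h𝒜 : IsEpsilonStronglyGraded 𝒜) {g : ι}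
    (hg : (1 : S) ∈ 𝒜 g * 𝒜 (-g)) (k : ι) : 𝒜 g * 𝒜 k = 𝒜 (g + k) :=
  le_antisymm (AddSubgroup.mul_le_of_gradedMonoid 𝒜 g k)
    ((h𝒜.2 g k).1 ▸ AddSubgroup.le_mul_of_one_mem hg _)

/-- An epsilon-strongly graded ring is strongly graded iff `ε g = 1` for every `g`. -/
theorem stronglyGraded_iff_epsilon_eq_one [DecidableEq ι]
    (𝒜 : ι → AddSubgroup S) [GradedRing 𝒜]
    (h : IsEpsilonStronglyGraded 𝒜) (ε : ι → S)
    (hmem : ∀ g : ι, ε g ∈ 𝒜 g * 𝒜 (-g))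
    (hid : ∀ g : ι, ∀ x ∈ 𝒜 g * 𝒜 (-g), ε g * x = x ∧ x * ε g = x) :
    (∀ g h : ι, 𝒜 g * 𝒜 h = 𝒜 (g + h)) ↔ ∀ g : ι, ε g = 1 := by
  constructor
  · intro hstrong g
    have hone : (1 : S) ∈ 𝒜 g * 𝒜 (-g) := by
      rw [hstrong, add_neg_cancel]
      exact SetLike.one_mem_graded 𝒜
    simpa only [mul_one] using (hid g 1 hone).1
  · intro hε g
    exact h.mul_eq_of_one_mem (hε g ▸ hmem g)
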